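/- arXiv:1809.04795 — 15 statements merged into one kernel-verified Lean document; each statement's English description precedes it below -/
import Mathlib

section
/- Let α, γ, Δ, b ∈ ℂ with α + γ ≠ 0, and let g be a polynomial in one variable over ℂ such that (α+γ+μ+Δλ)·g(μ) = (bλ+μ)·g(λ+μ) for all λ, μ ∈ ℂ. Then g = 0. -/
/-- H-part cocycle condition for extensions `0 → ℂc_γ → E → M(α,Δ) → 0` over `W(b)`:
if `α + γ ≠ 0` and `(α+γ+μ+Δλ)·g(μ) = (bλ+μ)·g(λ+μ)` for all `λ, μ ∈ ℂ`, then `g = 0`. -/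
theorem stmt_0 (α γ Δ b : ℂ) (hαγ : α + γ ≠ 0) (g : Polynomial ℂ)
    (hg : ∀ lam mu : ℂ,
      (α + γ + mu + Δ * lam) * g.eval mu = (b * lam + mu) * g.eval (lam + mu)) :
    g = 0 := by
  apply Polynomial.funext
  intro mu
  have := hg 0 mu
  simp at this
  simpa using this.resolve_left hαγ
end

section
/- Let α, γ, Δ ∈ ℂ with α + γ ≠ 0, and let f be a polynomial in one variable over ℂ such that (α+γ+λ+Δμ)·f(λ) − (α+γ+μ+Δλ)·f(μ) = (λ−μ)·f(λ+μ) for all λ, μ ∈ ℂ. Then there exists c ∈ ℂ such that f(λ) = c·(α+γ+Δλ) for all λ ∈ ℂ. -/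
/-- L-part cocycle condition for extensions `0 → ℂc_γ → E → M(α,Δ) → 0` over `W(b)`:
if `α + γ ≠ 0` and `(α+γ+λ+Δμ)·f(λ) − (α+γ+μ+Δλ)·f(μ) = (λ−μ)·f(λ+μ)` for all `λ, μ`,
then `f(λ) = c·(α+γ+Δλ)` for some constant `c`. -/
theorem stmt_1 (α γ Δ : ℂ) (hαγ : α + γ ≠ 0) (f : Polynomial ℂ)
    (hf : ∀ lam mu : ℂ,
      (α + γ + lam + Δ * mu) * f.eval lam - (α + γ + mu + Δ * lam) * f.eval mu
        = (lam - mu) * f.eval (lam + mu)) :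
    ∃ c : ℂ, ∀ lam : ℂ, f.eval lam = c * (α + γ + Δ * lam) := by
  refine ⟨f.eval 0 / (α + γ), fun lam => ?_⟩
  have h := hf lam 0
  simp only [add_zero] at h
  field_simp
  linear_combination h
end

section
/- Let Δ, b ∈ ℂ with b ≠ 0, and let g be a polynomial in one variable over ℂ such that (μ+Δλ)·g(μ) = (bλ+μ)·g(λ+μ) for all λ, μ ∈ ℂ. Then g is a constant polynomial, and if g ≠ 0 then Δ = b. -/
open Polynomial

/-- Pointwise, `x` can be cancelled only for `x ≠ 0`; as a polynomial identity it cancels outright. -/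
theorem Polynomial.eq_C_div_of_forall_mul_eval_eq {K : Type*} [Field K] [Infinite K] {g : K[X]}
    {a b : K} (hb : b ≠ 0) (h : ∀ x, b * x * g.eval x = a * x) : g = C (a / b) := by
  have hX : X * (C b * g) = X * C a := Polynomial.funext fun x => by
    simp only [eval_mul, eval_X, eval_C]
    linear_combination h x
  have hCb : C b * g = C a := mul_left_cancel₀ X_ne_zero hX
  calc g = C b⁻¹ * (C b * g) := by rw [← mul_assoc, ← C_mul, inv_mul_cancel₀ hb, C_1, one_mul]
    _ = C (a / b) := by rw [hCb, ← C_mul, div_eq_inv_mul]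

/-- H-part cocycle condition for extensions `0 → ℂc_γ → E → M(α,Δ) → 0` over `W(b)` with
`α + γ = 0`: if `b ≠ 0` and `(μ+Δλ)·g(μ) = (bλ+μ)·g(λ+μ)` for all `λ, μ ∈ ℂ`, then `g` is a
constant polynomial, and if moreover `g ≠ 0` then `Δ = b`. -/
theorem stmt_2 (Δ b : ℂ) (hb : b ≠ 0) (g : Polynomial ℂ)
    (hg : ∀ lam mu : ℂ,
      (mu + Δ * lam) * g.eval mu = (b * lam + mu) * g.eval (lam + mu)) :
    (∃ c : ℂ, g = Polynomial.C c) ∧ (g ≠ 0 → Δ = b) := by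
  have hconst : g = C (Δ * g.eval 0 / b) :=
    eq_C_div_of_forall_mul_eval_eq hb fun lam => by simpa [mul_right_comm] using (hg lam 0).symm
  refine ⟨⟨_, hconst⟩, fun hg0 => ?_⟩
  have heval : g.eval 0 ≠ 0 := fun h => hg0 (by rw [hconst, h, mul_zero, zero_div, C_0])
  have hfix : g.eval 0 = Δ * g.eval 0 / b := by
    conv_lhs => rw [hconst]
    exact eval_C
  rw [eq_div_iff hb] at hfix
  exact mul_left_cancel₀ heval (by linear_combination -hfix)
end

section
/- Let Δ ∈ ℂ with Δ ≠ 0, Δ ≠ 1 and Δ ≠ 2, and let f be a polynomial in one variable over ℂ such that (λ+Δμ)·f(λ) − (μ+Δλ)·f(μ) = (λ−μ)·f(λ+μ) for all λ, μ ∈ ℂ. Then there exists c ∈ ℂ such that f(λ) = c·λ for all λ ∈ ℂ. -/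
/-- Virasoro cocycle condition for extensions `0 → ℂc_γ → E → M(α,Δ) → 0` with `α + γ = 0`:
if `Δ ∉ {0,1,2}` and `(λ+Δμ)·f(λ) − (μ+Δλ)·f(μ) = (λ−μ)·f(λ+μ)` for all `λ, μ ∈ ℂ`, then
`f(λ) = c·λ` for some constant `c`. -/
theorem stmt_3 (Δ : ℂ) (h0 : Δ ≠ 0) (h1 : Δ ≠ 1) (h2 : Δ ≠ 2) (f : Polynomial ℂ)
    (hf : ∀ lam mu : ℂ,
      (lam + Δ * mu) * f.eval lam - (mu + Δ * lam) * f.eval mu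
        = (lam - mu) * f.eval (lam + mu)) :
    ∃ c : ℂ, ∀ lam : ℂ, f.eval lam = c * lam := by
  -- f 0 = 0
  have hf0 : f.eval 0 = 0 := by
    have := hf 1 0
    simp at this
    rcases this with h | h
    · exact absurd h h0
    · exact h
  -- f is odd
  have hodd : ∀ mu : ℂ, f.eval (-mu) = - f.eval mu := by
    intro mu
    rcases eq_or_ne mu 0 with rfl | hmu
    · simp [hf0]
    · have := hf mu (-mu)
      rw [show mu + -mu = 0 by ring, hf0, mul_zero] at this
      have h' : (1 - Δ) * mu * (f.eval mu + f.eval (-mu)) = 0 := by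
        linear_combination this
      have hΔ : (1 - Δ) ≠ 0 := sub_ne_zero.mpr (fun h => h1 h.symm)
      have := mul_eq_zero.mp h'
      rcases this with h | h
      · exact absurd h (mul_ne_zero hΔ hmu)
      · linear_combination h
  -- doubling: f (2μ) = 2 f μ
  have hdouble : ∀ mu : ℂ, f.eval (2 * mu) = 2 * f.eval mu := by
    intro mu
    rcases eq_or_ne mu 0 with rfl | hmu
    · simp [hf0]
    · have := hf (2 * mu) (-mu)
      rw [show 2 * mu + -mu = mu by ring, hodd mu] at this
      have h' : (2 - Δ) * mu * (f.eval (2 * mu) - 2 * f.eval mu) = 0 := by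
        linear_combination this
      have hΔ : (2 - Δ) ≠ 0 := sub_ne_zero.mpr (fun h => h2 h.symm)
      rcases mul_eq_zero.mp h' with h | h
      · exact absurd h (mul_ne_zero hΔ hmu)
      · linear_combination h
  -- f(2^k) = 2^k f(1)
  have hpow : ∀ k : ℕ, f.eval (2 ^ k) = 2 ^ k * f.eval 1 := by
    intro k
    induction k with
    | zero => simp
    | succ k ih =>
      rw [pow_succ, mul_comm ((2:ℂ)^k) 2, hdouble, ih]; ring
  set g : Polynomial ℂ := f - Polynomial.C (f.eval 1) * Polynomial.X with hg
  have hgroot : ∀ k : ℕ, g.IsRoot ((2:ℂ) ^ k) := by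
    intro k
    simp only [hg, Polynomial.IsRoot.def, Polynomial.eval_sub, Polynomial.eval_mul,
      Polynomial.eval_C, Polynomial.eval_X, hpow k]
    ring
  have hinj : Function.Injective (fun k : ℕ => (2:ℂ) ^ k) := by
    intro a b hab
    have hr : ((2 ^ a : ℕ) : ℂ) = ((2 ^ b : ℕ) : ℂ) := by push_cast; exact hab
    have : (2 ^ a : ℕ) = 2 ^ b := Nat.cast_injective hr
    exact Nat.pow_right_injective (le_refl 2) this
  have hg0 : g = 0 := by
    apply Polynomial.eq_zero_of_infinite_isRoot
    apply Set.Infinite.mono (Set.range_subset_iff.mpr hgroot)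
    exact Set.infinite_range_of_injective hinj
  refine ⟨f.eval 1, fun lam => ?_⟩
  have := congrArg (Polynomial.eval lam) hg0
  simp [hg] at this
  linear_combination this
end

section
/- Let f be a polynomial in one variable over ℂ. Then (λ+μ)·f(λ) − (μ+λ)·f(μ) = (λ−μ)·f(λ+μ) holds for all λ, μ ∈ ℂ (i.e., f satisfies the Virasoro cocycle equation with Δ = 1) if and only if there exist c₁, c₂ ∈ ℂ such that f(λ) = c₁λ + c₂λ² for all λ ∈ ℂ. -/
/-- Virasoro cocycle equation with `Δ = 1`: a polynomial `f` satisfies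
`(λ+μ)·f(λ) − (μ+λ)·f(μ) = (λ−μ)·f(λ+μ)` for all `λ, μ ∈ ℂ` if and only if
`f(λ) = c₁λ + c₂λ²` for some constants `c₁, c₂`. -/
theorem stmt_4 (f : Polynomial ℂ) :
    (∀ lam mu : ℂ,
      (lam + mu) * f.eval lam - (mu + lam) * f.eval mu = (lam - mu) * f.eval (lam + mu)) ↔
    ∃ c₁ c₂ : ℂ, ∀ lam : ℂ, f.eval lam = c₁ * lam + c₂ * lam ^ 2 := by
  constructor
  · intro h
    set A := f.eval 1 with hA
    set B := f.eval 2 with hB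
    set c₁ : ℂ := 2 * A - B / 2 with hc1
    set c₂ : ℂ := B / 2 - A with hc2
    refine ⟨c₁, c₂, ?_⟩
    set P : Polynomial ℂ := f - Polynomial.C c₁ * Polynomial.X
        - Polynomial.C c₂ * Polynomial.X ^ 2 with hPdef
    have hPeval : ∀ x : ℂ, P.eval x = f.eval x - c₁ * x - c₂ * x ^ 2 := by
      intro x; simp [hPdef]
    have hf0 : f.eval 0 = 0 := by
      simpa using h 1 0
    have hP0 : P.eval 0 = 0 := by rw [hPeval]; simp [hf0]
    have hP1 : P.eval 1 = 0 := by rw [hPeval]; rw [← hA]; ring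
    have hP2 : P.eval 2 = 0 := by rw [hPeval]; rw [← hB]; ring
    have hP : ∀ lam mu : ℂ,
        (lam + mu) * P.eval lam - (mu + lam) * P.eval mu
          = (lam - mu) * P.eval (lam + mu) := by
      intro lam mu
      rw [hPeval, hPeval, hPeval]
      linear_combination h lam mu
    have key : ∀ n : ℕ, P.eval (n : ℂ) = 0 := by
      intro n
      induction n with
      | zero => simpa using hP0
      | succ n ih =>
        match n, ih with
        | 0, _ => simpa using hP1
        | 1, _ => simpa using hP2
        | (m + 2), ih =>
          have hne : ((m : ℂ) + 2) - 1 ≠ 0 := by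
            intro hc
            exact Nat.cast_add_one_ne_zero (R := ℂ) m (by linear_combination hc)
          have heq := hP ((m : ℂ) + 2) 1
          rw [hP1] at heq
          push_cast at ih ⊢
          rw [ih] at heq
          have : ((m : ℂ) + 2 - 1) * P.eval ((m : ℂ) + 2 + 1) = 0 := by
            linear_combination -heq
          have h0 := mul_eq_zero.mp this
          rcases h0 with h0 | h0
          · exact absurd h0 hne
          · linear_combination h0
    have hPzero : P = 0 := by
      apply Polynomial.eq_zero_of_infinite_isRoot
      apply Set.Infinite.mono (s := Set.range (fun n : ℕ => (n : ℂ)))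
      · rintro x ⟨n, rfl⟩
        exact key n
      · exact Set.infinite_range_of_injective Nat.cast_injective
    intro lam
    have := hPeval lam
    rw [hPzero] at this
    simp at this
    linear_combination -this
  · rintro ⟨c₁, c₂, h⟩ lam mu
    rw [h, h, h]
    ring
end

section
/- Let f be a polynomial in one variable over ℂ. Then (λ+2μ)·f(λ) − (μ+2λ)·f(μ) = (λ−μ)·f(λ+μ) holds for all λ, μ ∈ ℂ (i.e., f satisfies the Virasoro cocycle equation with Δ = 2) if and only if there exist c₁, c₃ ∈ ℂ such that f(λ) = c₁λ + c₃λ³ for all λ ∈ ℂ. -/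
/-- Virasoro cocycle equation with `Δ = 2`: a polynomial `f` satisfies
`(λ+2μ)·f(λ) − (μ+2λ)·f(μ) = (λ−μ)·f(λ+μ)` for all `λ, μ ∈ ℂ` if and only if
`f(λ) = c₁λ + c₃λ³` for some constants `c₁, c₃`. -/
theorem stmt_5 (f : Polynomial ℂ) :
    (∀ lam mu : ℂ,
      (lam + 2 * mu) * f.eval lam - (mu + 2 * lam) * f.eval mu
        = (lam - mu) * f.eval (lam + mu)) ↔
    ∃ c₁ c₃ : ℂ, ∀ lam : ℂ, f.eval lam = c₁ * lam + c₃ * lam ^ 3 := by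
  constructor
  · intro h
    set a : ℂ := (8 * f.eval 1 - f.eval 2) / 6 with ha
    set b : ℂ := (f.eval 2 - 2 * f.eval 1) / 6 with hb
    refine ⟨a, b, ?_⟩
    set p : Polynomial ℂ := f - Polynomial.C a * Polynomial.X
        - Polynomial.C b * Polynomial.X ^ 3 with hpdef
    have hpe : ∀ x : ℂ, p.eval x = f.eval x - a * x - b * x ^ 3 := by
      intro x; simp [hpdef]
    have f0 : f.eval 0 = 0 := by
      have := h 1 0
      norm_num at this
      exact this
    have hp : ∀ l m : ℂ,
        (l + 2 * m) * p.eval l - (m + 2 * l) * p.eval m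
          = (l - m) * p.eval (l + m) := by
      intro l m
      simp only [hpe]
      linear_combination h l m
    have p1 : p.eval 1 = 0 := by rw [hpe]; field_simp [ha, hb]; ring
    have p2 : p.eval 2 = 0 := by rw [hpe]; field_simp [ha, hb]; ring
    have key : ∀ n : ℕ, p.eval (n : ℂ) = 0 := by
      intro n
      induction n using Nat.strong_induction_on with
      | _ n ih =>
        match n with
        | 0 => simpa [hpe] using f0
        | 1 => simpa using p1
        | 2 => simpa using p2
        | (m + 3) =>
          have ihm : p.eval ((m : ℂ) + 2) = 0 := by
            have := ih (m + 2) (by omega)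
            push_cast at this
            convert this using 2
          have hrec := hp ((m : ℂ) + 2) 1
          rw [ihm, p1] at hrec
          have hm1 : (m : ℂ) + 1 ≠ 0 := Nat.cast_add_one_ne_zero m
          push_cast
          have h2 : ((m : ℂ) + 1) * p.eval ((m : ℂ) + 3) = 0 := by
            have e3 : (m : ℂ) + 2 + 1 = (m : ℂ) + 3 := by ring
            rw [e3] at hrec
            linear_combination -hrec
          rcases mul_eq_zero.mp h2 with h | h
          · exact absurd h hm1
          · exact h
    have hp0 : p = 0 := by
      apply Polynomial.eq_zero_of_infinite_isRoot
      apply Set.Infinite.mono (s := Set.range (Nat.cast : ℕ → ℂ))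
      · rintro x ⟨n, rfl⟩
        exact key n
      · exact Set.infinite_range_of_injective Nat.cast_injective
    intro lam
    have := hpe lam
    rw [hp0] at this
    simp at this
    linear_combination -this
  · rintro ⟨c₁, c₃, hf⟩ lam mu
    rw [hf, hf, hf]
    ring
end

section
/- Let Δ ∈ ℂ with Δ ≠ 0, and let f be a polynomial in two variables over ℂ such that (∂+Δλ)·f(∂+λ, μ) − (∂+Δμ)·f(∂+μ, λ) = (λ−μ)·f(∂, λ+μ) for all ∂, λ, μ ∈ ℂ. Then either there exists a one-variable polynomial ψ over ℂ such that f(∂,λ) = (∂+Δλ)·ψ(∂+λ) for all ∂, λ ∈ ℂ, or Δ = 1 and there exist a ∈ ℂ and a one-variable polynomial ψ such that f(∂,λ) = a + (∂+λ)·ψ(∂+λ) for all ∂, λ ∈ ℂ. -/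
/-- Evaluation of a two-variable polynomial at a pair of complex numbers. -/
noncomputable def ev2 (p : MvPolynomial (Fin 2) ℂ) (x y : ℂ) : ℂ :=
  MvPolynomial.eval ![x, y] p

open MvPolynomial Polynomial

/-- L-cocycle condition (homogeneous form) for Virasoro extensions
`0 → M(α,Δ) → E → ℂc_γ → 0`: if `Δ ≠ 0` and
`(∂+Δλ)·f(∂+λ,μ) − (∂+Δμ)·f(∂+μ,λ) = (λ−μ)·f(∂,λ+μ)` for all `∂, λ, μ`,
then either `f(∂,λ) = (∂+Δλ)·ψ(∂+λ)` for a one-variable polynomial `ψ`, or `Δ = 1` and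
`f(∂,λ) = a + (∂+λ)·ψ(∂+λ)` for some constant `a` and one-variable polynomial `ψ`. -/
theorem stmt_6 (Δ : ℂ) (hΔ : Δ ≠ 0) (f : MvPolynomial (Fin 2) ℂ)
    (hf : ∀ pa lam mu : ℂ,
      (pa + Δ * lam) * ev2 f (pa + lam) mu - (pa + Δ * mu) * ev2 f (pa + mu) lam
        = (lam - mu) * ev2 f pa (lam + mu)) :
    (∃ ψ : Polynomial ℂ, ∀ pa lam : ℂ, ev2 f pa lam = (pa + Δ * lam) * ψ.eval (pa + lam)) ∨
    (Δ = 1 ∧ ∃ (a : ℂ) (ψ : Polynomial ℂ),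
      ∀ pa lam : ℂ, ev2 f pa lam = a + (pa + lam) * ψ.eval (pa + lam)) := by
  classical
  set G : Polynomial ℂ := MvPolynomial.aeval ![(Polynomial.X : Polynomial ℂ), 0] f with hG
  have hGeval : ∀ x : ℂ, G.eval x = ev2 f x 0 := by
    intro x
    have h := MvPolynomial.comp_aeval_apply
      (f := ![(Polynomial.X : Polynomial ℂ), 0])
      (Polynomial.aeval x : Polynomial ℂ →ₐ[ℂ] ℂ) f
    rw [← hG, Polynomial.coe_aeval_eq_eval] at h
    rw [show (fun i => Polynomial.eval x (![(Polynomial.X : Polynomial ℂ), 0] i)) = ![x, 0] from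
      by funext i; fin_cases i <;> simp] at h
    rw [h, ev2]
    exact congrFun (congrArg (fun (g : MvPolynomial (Fin 2) ℂ →+* ℂ) => ⇑g)
      (MvPolynomial.coe_aeval_eq_eval ![x, 0])) f
  -- key identity from mu = 0
  have h1 : ∀ pa lam : ℂ, (pa + lam) * ev2 f pa lam = (pa + Δ * lam) * G.eval (pa + lam) := by
    intro pa lam
    have := hf pa lam 0
    simp only [mul_zero, add_zero, sub_zero] at this
    rw [hGeval]
    linear_combination -this
  have hconv : ∀ (x : Fin 2 → ℂ) (p : MvPolynomial (Fin 2) ℂ),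
      MvPolynomial.eval x p = MvPolynomial.aeval x p := fun x p =>
    (congrFun (congrArg (fun (g : MvPolynomial (Fin 2) ℂ →+* ℂ) => ⇑g)
      (MvPolynomial.coe_aeval_eq_eval x)) p).symm
  -- evaluation of substituted one-variable polynomials
  have hGc : ∀ (p : Polynomial ℂ) (x : Fin 2 → ℂ),
      MvPolynomial.eval x (Polynomial.aeval (X 0 + X 1 : MvPolynomial (Fin 2) ℂ) p)
        = p.eval (x 0 + x 1) := by
    intro p x
    rw [hconv, ← Polynomial.aeval_algHom_apply, ← Polynomial.coe_aeval_eq_eval]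
    simp
  have hX01 : (X 0 + X 1 : MvPolynomial (Fin 2) ℂ) ≠ 0 := by
    intro h
    have := congrArg (MvPolynomial.eval ![1, 0]) h
    simp at this
  have hev : ∀ (x : Fin 2 → ℂ), ev2 f (x 0) (x 1) = MvPolynomial.eval x f := by
    intro x
    have : x = ![x 0, x 1] := by funext i; fin_cases i <;> rfl
    rw [ev2, ← this]
  have key : ((X 0 + X 1 : MvPolynomial (Fin 2) ℂ)) * f
      = (X 0 + MvPolynomial.C Δ * X 1) * Polynomial.aeval (X 0 + X 1 : MvPolynomial (Fin 2) ℂ) G := by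
    apply MvPolynomial.funext
    intro x
    have h2 := h1 (x 0) (x 1)
    rw [hev x] at h2
    simp only [map_mul, map_add, MvPolynomial.eval_X, MvPolynomial.eval_C, hGc]
    exact h2
  by_cases hone : Δ = 1
  · right
    refine ⟨hone, G.coeff 0, G.divX, ?_⟩
    subst hone
    rw [show (MvPolynomial.C 1 * X 1 : MvPolynomial (Fin 2) ℂ) = X 1 by simp] at key
    have hf2 := mul_left_cancel₀ hX01 key
    intro pa lam
    rw [ev2, hf2, hGc]
    have hx : (![pa, lam] : Fin 2 → ℂ) 0 + ![pa, lam] 1 = pa + lam := by simp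
    rw [hx]
    have hd := congrArg (Polynomial.eval (pa + lam)) (Polynomial.X_mul_divX_add G)
    simp only [Polynomial.eval_add, Polynomial.eval_mul, Polynomial.eval_X,
      Polynomial.eval_C] at hd
    linear_combination -hd
  · left
    have hG0 : G.coeff 0 = 0 := by
      have h0 := h1 1 (-1)
      rw [show (1 : ℂ) + (-1) = 0 by ring] at h0
      have h0' : (1 - Δ) * Polynomial.eval 0 G = 0 := by linear_combination -h0
      rcases mul_eq_zero.mp h0' with h | h
      · exact absurd (by linear_combination -h) hone
      · rw [Polynomial.coeff_zero_eq_eval_zero]; exact h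
    obtain ⟨ψ, hψ⟩ := Polynomial.X_dvd_iff.mpr hG0
    refine ⟨ψ, ?_⟩
    have key2 : ((X 0 + X 1 : MvPolynomial (Fin 2) ℂ)) * f
        = (X 0 + X 1) * ((X 0 + MvPolynomial.C Δ * X 1) * Polynomial.aeval (X 0 + X 1 : MvPolynomial (Fin 2) ℂ) ψ) := by
      rw [key, hψ]
      simp only [map_mul, Polynomial.aeval_X]
      ring
    have hf2 := mul_left_cancel₀ hX01 key2
    intro pa lam
    rw [ev2, hf2]
    simp only [map_mul, map_add, MvPolynomial.eval_X, MvPolynomial.eval_C, hGc]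
    simp
end

section
/- Let Δ, c ∈ ℂ with Δ ≠ 0. Let f be a polynomial in two variables over ℂ and h a polynomial in one variable over ℂ such that for all ∂, λ, μ ∈ ℂ: (∂+Δλ)·f(∂+λ, μ) − (∂+Δμ)·f(∂+μ, λ) = (λ−μ)·f(∂, λ+μ), and (∂+λ−c)·f(∂,λ) = (∂+Δλ)·h(∂+λ). Then there exist a ∈ ℂ and a one-variable polynomial φ over ℂ such that f(∂,λ) = a + (∂+Δλ)·φ(∂+λ) and h(∂) = a + (∂−c)·φ(∂) for all ∂, λ ∈ ℂ; moreover, if a ≠ 0 then c = 0 and Δ = 1. -/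
lemma pe_eval (f : MvPolynomial (Fin 2) ℂ) (lam x : ℂ) :
    (MvPolynomial.aeval ![Polynomial.X, Polynomial.C lam] f : Polynomial ℂ).eval x
      = ev2 f x lam := by
  unfold ev2
  induction f using MvPolynomial.induction_on with
  | C a => simp
  | add p q hp hq => simp [hp, hq]
  | mul_X p i hp =>
    fin_cases i <;> simp [hp]

lemma poly_ext (F G : Polynomial ℂ) (t : ℂ)
    (hFG : ∀ x, x ≠ t → F.eval x = G.eval x) (x : ℂ) : F.eval x = G.eval x := by
  have hFG' : F = G := by
    rw [← sub_eq_zero]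
    apply Polynomial.eq_zero_of_infinite_isRoot
    refine ((Set.finite_singleton t).infinite_compl).mono fun y hy => ?_
    simp only [Set.mem_compl_iff, Set.mem_singleton_iff] at hy
    simp [Polynomial.IsRoot, sub_eq_zero, hFG y hy]
  rw [hFG']

/-- Extensions `0 → M(α,Δ) → E → ℂc_γ → 0` over `W(b)` (after the shift `∂ ↦ ∂+α`,
with `c := α+γ`): if `Δ ≠ 0`,
`(∂+Δλ)·f(∂+λ,μ) − (∂+Δμ)·f(∂+μ,λ) = (λ−μ)·f(∂,λ+μ)` and
`(∂+λ−c)·f(∂,λ) = (∂+Δλ)·h(∂+λ)` for all `∂, λ, μ`, then there are `a ∈ ℂ` and a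
one-variable polynomial `φ` with `f(∂,λ) = a + (∂+Δλ)·φ(∂+λ)`, `h(∂) = a + (∂−c)·φ(∂)`,
and if `a ≠ 0` then `c = 0` and `Δ = 1`. -/
theorem stmt_7 (Δ c : ℂ) (hΔ : Δ ≠ 0) (f : MvPolynomial (Fin 2) ℂ) (h : Polynomial ℂ)
    (hf1 : ∀ pa lam mu : ℂ,
      (pa + Δ * lam) * ev2 f (pa + lam) mu - (pa + Δ * mu) * ev2 f (pa + mu) lam
        = (lam - mu) * ev2 f pa (lam + mu))
    (hf2 : ∀ pa lam : ℂ,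
      (pa + lam - c) * ev2 f pa lam = (pa + Δ * lam) * h.eval (pa + lam)) :
    ∃ (a : ℂ) (φ : Polynomial ℂ),
      (∀ pa lam : ℂ, ev2 f pa lam = a + (pa + Δ * lam) * φ.eval (pa + lam)) ∧
      (∀ pa : ℂ, h.eval pa = a + (pa - c) * φ.eval pa) ∧
      (a ≠ 0 → c = 0 ∧ Δ = 1) := by
  by_cases hcase : Δ = 1 ∧ c = 0
  · obtain ⟨hΔ1, hc0⟩ := hcase
    subst hΔ1; subst hc0
    have hh : ∀ y : ℂ, h.eval y = h.coeff 0 + y * (h.divX.eval y) := by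
      intro y
      conv_lhs => rw [← Polynomial.divX_mul_X_add h]
      simp; ring
    refine ⟨h.coeff 0, h.divX, ?_, ?_, fun _ => ⟨rfl, rfl⟩⟩
    · intro pa lam
      have key := poly_ext (MvPolynomial.aeval ![Polynomial.X, Polynomial.C lam] f)
        (h.comp (Polynomial.X + Polynomial.C lam)) (-lam) ?_ pa
      · rw [pe_eval] at key
        simp only [Polynomial.eval_comp, Polynomial.eval_add, Polynomial.eval_X,
          Polynomial.eval_C] at key
        rw [key, hh (pa + lam)]
        ring
      · intro x hx
        have h2 := hf2 x lam
        have hne : x + lam ≠ 0 := fun h0 => hx (by linear_combination h0)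
        rw [pe_eval]
        simp only [Polynomial.eval_comp, Polynomial.eval_add, Polynomial.eval_X,
          Polynomial.eval_C]
        apply mul_left_cancel₀ hne
        simpa using h2
    · intro pa
      rw [hh pa]; ring
  · -- h.eval c = 0 in all remaining cases
    have hroot : h.eval c = 0 := by
      by_cases hΔ1 : Δ = 1
      · have hc0 : c ≠ 0 := fun h0 => hcase ⟨hΔ1, h0⟩
        have h2 := hf2 c 0
        simp at h2
        rcases h2 with h2 | h2
        · exact absurd h2 hc0
        · exact h2
      · have hd : Δ - 1 ≠ 0 := sub_ne_zero.mpr hΔ1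
        set t : ℂ := (1 - c) / (Δ - 1) with ht
        have h2 := hf2 (c - t) t
        have e1 : c - t + t - c = 0 := by ring
        have e2 : c - t + Δ * t = 1 := by
          have : (Δ - 1) * t = 1 - c := by
            rw [ht]; field_simp
          linear_combination this
        have e3 : c - t + t = c := by ring
        rw [e1, e2, e3, zero_mul, one_mul] at h2
        exact h2.symm
    obtain ⟨φ, hφ⟩ : (Polynomial.X - Polynomial.C c) ∣ h :=
      Polynomial.dvd_iff_isRoot.mpr hroot
    refine ⟨0, φ, ?_, ?_, fun ha => absurd rfl ha⟩
    · intro pa lam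
      have key := poly_ext (MvPolynomial.aeval ![Polynomial.X, Polynomial.C lam] f)
        ((Polynomial.X + Polynomial.C (Δ * lam)) *
          (φ.comp (Polynomial.X + Polynomial.C lam))) (c - lam) ?_ pa
      · rw [pe_eval] at key
        simp only [Polynomial.eval_mul, Polynomial.eval_comp, Polynomial.eval_add,
          Polynomial.eval_X, Polynomial.eval_C] at key
        rw [key]; ring
      · intro x hx
        have h2 := hf2 x lam
        have hne : x + lam - c ≠ 0 := fun h0 => hx (by linear_combination h0)
        rw [pe_eval]
        simp only [Polynomial.eval_mul, Polynomial.eval_comp, Polynomial.eval_add,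
          Polynomial.eval_X, Polynomial.eval_C]
        apply mul_left_cancel₀ hne
        rw [h2, hφ]
        simp only [Polynomial.eval_mul, Polynomial.eval_sub, Polynomial.eval_X,
          Polynomial.eval_C]
        ring
    · intro pa
      rw [hφ]
      simp only [Polynomial.eval_mul, Polynomial.eval_sub, Polynomial.eval_X,
        Polynomial.eval_C]
      ring
end

section
/- Let α, ᾱ, Δ, Δ̄, b ∈ ℂ with α ≠ ᾱ. Let f and g be polynomials in two variables over ℂ such that for all ∂, λ, μ ∈ ℂ: (λ−μ)·f(∂,λ+μ) = (∂+λ+Δμ+α)·f(∂,λ) + (∂+Δ̄λ+ᾱ)·f(∂+λ,μ) − (∂+μ+Δλ+α)·f(∂,μ) − (∂+Δ̄μ+ᾱ)·f(∂+μ,λ), and −(bλ+μ)·g(∂,λ+μ) = (∂+Δ̄λ+ᾱ)·g(∂+λ,μ) − (∂+μ+Δλ+α)·g(∂,μ). Then g = 0, and there exists a one-variable polynomial φ over ℂ such that f(∂,λ) = (∂+α+Δλ)·φ(∂) − (∂+ᾱ+Δ̄λ)·φ(∂+λ) for all ∂, λ ∈ ℂ. -/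
/-- Evaluating the one-variable polynomial obtained from a two-variable polynomial by
substituting `λ = 0`. -/
lemma ev2_aeval_zero (f : MvPolynomial (Fin 2) ℂ) (x : ℂ) :
    (MvPolynomial.aeval ![Polynomial.X, 0] f).eval x = ev2 f x 0 := by
  rw [ev2, MvPolynomial.aeval_def]
  have h := MvPolynomial.eval₂_comp_left (Polynomial.evalRingHom x)
    (algebraMap ℂ (Polynomial ℂ)) ![Polynomial.X, 0] f
  simp only [Polynomial.coe_evalRingHom] at h
  rw [h, MvPolynomial.eval]
  congr 1
  · ext a; simp
  · funext i; fin_cases i <;> simp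

/-- Extensions `0 → M(ᾱ,Δ̄) → E → M(α,Δ) → 0` over `W(b)` with `α ≠ ᾱ` are trivial:
if `f, g` satisfy the two cocycle functional equations, then `g = 0` and
`f(∂,λ) = (∂+α+Δλ)·φ(∂) − (∂+ᾱ+Δ̄λ)·φ(∂+λ)` for some one-variable polynomial `φ`.
Here `α'` stands for `ᾱ` and `Δ'` for `Δ̄`. -/
theorem stmt_8 (α α' Δ Δ' b : ℂ) (hα : α ≠ α') (f g : MvPolynomial (Fin 2) ℂ)
    (hf : ∀ pa lam mu : ℂ,
      (lam - mu) * ev2 f pa (lam + mu)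
        = (pa + lam + Δ * mu + α) * ev2 f pa lam + (pa + Δ' * lam + α') * ev2 f (pa + lam) mu
          - (pa + mu + Δ * lam + α) * ev2 f pa mu - (pa + Δ' * mu + α') * ev2 f (pa + mu) lam)
    (hg : ∀ pa lam mu : ℂ,
      -(b * lam + mu) * ev2 g pa (lam + mu)
        = (pa + Δ' * lam + α') * ev2 g (pa + lam) mu - (pa + mu + Δ * lam + α) * ev2 g pa mu) :
    g = 0 ∧ ∃ φ : Polynomial ℂ, ∀ pa lam : ℂ,
      ev2 f pa lam = (pa + α + Δ * lam) * φ.eval pa - (pa + α' + Δ' * lam) * φ.eval (pa + lam) := by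
  have hsub : α - α' ≠ 0 := sub_ne_zero.mpr hα
  constructor
  · -- g = 0 : specialize the second equation at λ = 0.
    apply MvPolynomial.funext
    intro x
    have hx : x = ![x 0, x 1] := by funext i; fin_cases i <;> simp
    have h := hg (x 0) 0 (x 1)
    simp only [ev2, zero_add, add_zero, mul_zero] at h
    rw [hx, map_zero]
    have hz : (α - α') * MvPolynomial.eval ![x 0, x 1] g = 0 := by linear_combination h
    exact (mul_eq_zero.mp hz).resolve_left hsub
  · -- the polynomial φ(∂) = f(∂,0) / (α - α'), from the first equation at μ = 0.
    refine ⟨Polynomial.C (α - α')⁻¹ * MvPolynomial.aeval ![Polynomial.X, 0] f, fun pa lam => ?_⟩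
    have h := hf pa lam 0
    simp only [add_zero, mul_zero, sub_zero] at h
    have key : (α - α') * ev2 f pa lam
        = (pa + α + Δ * lam) * ev2 f pa 0 - (pa + α' + Δ' * lam) * ev2 f (pa + lam) 0 := by
      linear_combination -h
    simp only [Polynomial.eval_mul, Polynomial.eval_C, ev2_aeval_zero]
    field_simp
    linear_combination key
end

section
/- Let b, Δ, Δ̄ ∈ ℂ with b ≠ 0, and let g be a nonzero polynomial in two variables over ℂ such that −(bλ+μ)·g(∂,λ+μ) = (∂+Δ̄λ)·g(∂+λ,μ) − (∂+μ+Δλ)·g(∂,μ) for all ∂, λ, μ ∈ ℂ. Then g is a homogeneous polynomial (in ∂ and λ jointly), its total degree m satisfies Δ − Δ̄ = m + b, and the coefficient of ∂^m in g is nonzero. -/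
namespace Polynomial

theorem coeff_X_mul_derivative {R : Type*} [Semiring R] (p : R[X]) (n : ℕ) :
    (X * derivative p).coeff n = n * p.coeff n := by
  cases n with
  | zero => simp
  | succ n => rw [coeff_X_mul, coeff_derivative, ← Nat.cast_succ, Nat.cast_comm]

theorem eq_C_mul_X_pow_of_X_mul_derivative_eq {R : Type*} [CommRing R] [IsDomain R] [CharZero R]
    {p : R[X]} {c : R} (hp : p ≠ 0) (h : X * derivative p = C c * p) :
    c = p.natDegree ∧ p = C p.leadingCoeff * X ^ p.natDegree := by
  have hcoeff (j : ℕ) : (j - c) * p.coeff j = 0 := by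
    have := congr_arg (coeff · j) h
    simp only [coeff_X_mul_derivative, coeff_C_mul] at this
    rw [sub_mul, this, sub_self]
  have hc : c = p.natDegree :=
    (sub_eq_zero.mp ((mul_eq_zero.mp (hcoeff _)).resolve_right
      (leadingCoeff_ne_zero.mpr hp))).symm
  refine ⟨hc, ext fun j => ?_⟩
  rw [coeff_C_mul_X_pow]
  split_ifs with hj
  · rw [hj, leadingCoeff]
  · refine (mul_eq_zero.mp (hcoeff j)).resolve_left ?_
    simpa [hc, sub_eq_zero] using hj

end Polynomial

namespace MvPolynomial

theorem polynomial_eval_aeval {R σ : Type*} [CommSemiring R] (t : R) (f : σ → Polynomial R)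
    (g : MvPolynomial σ R) :
    (aeval f g).eval t = eval (fun i => (f i).eval t) g := by
  rw [← Polynomial.coe_aeval_eq_eval, ← AlgHom.comp_apply, comp_aeval]
  simp

theorem IsHomogeneous.of_X_mul {R σ : Type*} [CommSemiring R] {φ : MvPolynomial σ R} {i : σ}
    {n : ℕ} (h : (X i * φ).IsHomogeneous (n + 1)) : φ.IsHomogeneous n := by
  intro d hd
  have := h (d := Finsupp.single i 1 + d) (by rwa [coeff_X_mul])
  simp only [map_add, Finsupp.weight_single, Pi.one_apply, smul_eq_mul, mul_one] at this
  omega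

section restriction

variable {R : Type*} [CommSemiring R] {n : ℕ} (f : MvPolynomial (Fin (n + 1)) R)

theorem eval_map_eval_zero_finSuccEquiv (y : R) :
    ((finSuccEquiv R n f).map (eval 0)).eval y = eval (Fin.cons y 0) f :=
  (eval_eq_eval_mv_eval' 0 y f).symm

theorem coeff_map_eval_zero_finSuccEquiv (k : ℕ) :
    ((finSuccEquiv R n f).map (eval 0)).coeff k = f.coeff (Finsupp.single 0 k) := by
  rw [Polynomial.coeff_map, eval_zero, constantCoeff_eq, finSuccEquiv_coeff_coeff,
    Finsupp.cons_zero_eq_single_zero]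

end restriction

end MvPolynomial

theorem ev2_eq_eval (g : MvPolynomial (Fin 2) ℂ) (v : Fin 2 → ℂ) :
    ev2 g (v 0) (v 1) = MvPolynomial.eval v g := by
  rw [ev2]
  congr
  ext i
  fin_cases i <;> rfl

theorem eval_aeval_C_X_eq_ev2 (x t : ℂ) (g : MvPolynomial (Fin 2) ℂ) :
    (MvPolynomial.aeval ![Polynomial.C x, Polynomial.X] g).eval t = ev2 g x t := by
  have hv : (fun i => (![Polynomial.C x, Polynomial.X] i).eval t) = ![x, t] := by
    ext i
    fin_cases i <;> simp
  rw [MvPolynomial.polynomial_eval_aeval, hv, ev2]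

/-- Equation (F), with `Δ'` for `Δ̄`; variable `0` of `g` is `∂` and variable `1` is `λ`. -/
def IsHCocycle (b Δ Δ' : ℂ) (g : MvPolynomial (Fin 2) ℂ) : Prop :=
  ∀ pa lam mu : ℂ, -(b * lam + mu) * ev2 g pa (lam + mu)
    = (pa + Δ' * lam) * ev2 g (pa + lam) mu - (pa + mu + Δ * lam) * ev2 g pa mu

namespace IsHCocycle

variable {b Δ Δ' : ℂ} {g : MvPolynomial (Fin 2) ℂ}

open Polynomial in
theorem X_mul_derivative_eq {p : ℂ[X]} (hg : IsHCocycle b Δ Δ' g)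
    (hp : ∀ x, p.eval x = ev2 g x 0) :
    X * derivative p = C (Δ - Δ' - b) * p := by
  refine funext fun x => ?_
  -- (F) at `μ = 0` and `∂ = x`, as a polynomial identity in `λ`
  have hline : C (-b) * (X * MvPolynomial.aeval ![C x, X] g)
      = C Δ' * (X * taylor x p) - C Δ * (X * C (p.eval x)) + C x * (taylor x p - C (p.eval x)) := by
    refine funext fun t => ?_
    have key := hg x t 0
    simp only [add_zero] at key
    simp only [eval_mul, eval_add, eval_sub, eval_C, eval_X, eval_aeval_C_X_eq_ev2, taylor_eval,
      add_comm t, hp]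
    linear_combination key
  have hline0 : (MvPolynomial.aeval ![C x, X] g).coeff 0 = p.eval x := by
    rw [coeff_zero_eq_eval_zero, eval_aeval_C_X_eq_ev2, hp]
  have hcoeff := congr_arg (coeff · 1) hline
  simp only [coeff_add, coeff_sub, coeff_C_mul, coeff_X_mul, coeff_C_zero, coeff_C_succ,
    taylor_coeff_zero, taylor_coeff_one, hline0] at hcoeff
  simp only [eval_mul, eval_X, eval_C]
  linear_combination -hcoeff

open MvPolynomial in
theorem X_one_mul_eq (hb : b ≠ 0) (hg : IsHCocycle b Δ Δ' g) {a : ℂ} {n : ℕ}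
    (hp : ∀ x, ev2 g x 0 = a * x ^ n) :
    X 1 * g
      = C (a / b) * ((X 0 + C Δ * X 1) * X 0 ^ n - (X 0 + C Δ' * X 1) * (X 0 + X 1) ^ n) := by
  refine funext fun v => ?_
  have key := hg (v 0) (v 1) 0
  simp only [add_zero, hp, ev2_eq_eval] at key
  simp only [map_mul, map_sub, map_add, map_pow, eval_X, eval_C]
  field_simp
  linear_combination -key

open MvPolynomial in
theorem isHomogeneous_of_forall_ev2_eq (hb : b ≠ 0) (hg : IsHCocycle b Δ Δ' g) {a : ℂ} {n : ℕ}
    (hp : ∀ x, ev2 g x 0 = a * x ^ n) : g.IsHomogeneous n := by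
  refine IsHomogeneous.of_X_mul (i := 1) ?_
  rw [hg.X_one_mul_eq hb hp]
  have hlin (c : ℂ) : (X 0 + C c * X 1 : MvPolynomial (Fin 2) ℂ).IsHomogeneous 1 :=
    (isHomogeneous_X ℂ 0).add (isHomogeneous_C_mul_X c 1)
  have := ((hlin Δ).mul ((isHomogeneous_X ℂ 0).pow n)).sub
    ((hlin Δ').mul (((isHomogeneous_X ℂ 0).add (isHomogeneous_X ℂ 1)).pow n))
  simpa [add_comm] using this.C_mul (a / b)

theorem eq_zero_of_forall_ev2_eq_zero (hb : b ≠ 0) (hg : IsHCocycle b Δ Δ' g)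
    (hp : ∀ x, ev2 g x 0 = 0) : g = 0 := by
  have := hg.X_one_mul_eq hb (a := 0) (n := 0) (by simpa using hp)
  simpa [MvPolynomial.X_ne_zero] using this

end IsHCocycle

/-- A nonzero polynomial solution `g` of the H-part cocycle equation (F) for `W(b)`, `b ≠ 0`,
is homogeneous (in `∂` and `λ` jointly), its total degree `m` satisfies `Δ − Δ̄ = m + b`,
and the coefficient of `∂^m` in `g` is nonzero. Here `Δ'` stands for `Δ̄`, variable `0`
is `∂` and variable `1` is `λ`. -/
theorem stmt_9 (b Δ Δ' : ℂ) (hb : b ≠ 0) (g : MvPolynomial (Fin 2) ℂ) (hg0 : g ≠ 0)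
    (hg : ∀ pa lam mu : ℂ,
      -(b * lam + mu) * ev2 g pa (lam + mu)
        = (pa + Δ' * lam) * ev2 g (pa + lam) mu - (pa + mu + Δ * lam) * ev2 g pa mu) :
    ∃ m : ℕ, g.IsHomogeneous m ∧ g.totalDegree = m ∧ Δ - Δ' = m + b ∧
      MvPolynomial.coeff (Finsupp.single 0 m) g ≠ 0 := by
  replace hg : IsHCocycle b Δ Δ' g := hg
  set p := (MvPolynomial.finSuccEquiv ℂ 1 g).map (MvPolynomial.eval 0)
  have hp (x : ℂ) : p.eval x = ev2 g x 0 := by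
    rw [MvPolynomial.eval_map_eval_zero_finSuccEquiv, ← ev2_eq_eval]
    rfl
  have hp0 : p ≠ 0 := fun h =>
    hg0 (hg.eq_zero_of_forall_ev2_eq_zero hb fun x => by rw [← hp, h, Polynomial.eval_zero])
  obtain ⟨hdeg, hmono⟩ :=
    Polynomial.eq_C_mul_X_pow_of_X_mul_derivative_eq hp0 (hg.X_mul_derivative_eq hp)
  have hhom : g.IsHomogeneous p.natDegree :=
    hg.isHomogeneous_of_forall_ev2_eq hb (a := p.leadingCoeff) fun x => by
      rw [← hp, congrArg (Polynomial.eval x) hmono]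
      simp
  refine ⟨p.natDegree, hhom, hhom.totalDegree hg0, by linear_combination hdeg, ?_⟩
  rw [← MvPolynomial.coeff_map_eval_zero_finSuccEquiv]
  exact Polynomial.leadingCoeff_ne_zero.mpr hp0
end

section
/- Let b, Δ, Δ̄ ∈ ℂ with b ≠ 0, let m be a nonnegative integer, and let g(∂,λ) = Σ_{i=0}^{m} aᵢ ∂^{m−i} λ^{i} (aᵢ ∈ ℂ) be a homogeneous polynomial of degree m such that b·λ·g(∂,λ) = (∂+Δλ)·g(∂,0) − (∂+Δ̄λ)·g(∂+λ,0) for all ∂, λ ∈ ℂ. Then b·aᵢ = −a₀·(C(m,i+1) + Δ̄·C(m,i)) for all 1 ≤ i ≤ m, where C(m,k) denotes the binomial coefficient (with C(m,m+1) = 0); moreover, if a₀ ≠ 0 then Δ − Δ̄ = m + b. -/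
open Polynomial

/-- For the homogeneous polynomial `g(∂,λ) = Σ_{i=0}^{m} aᵢ ∂^{m−i} λ^{i}` satisfying the
`μ = 0` specialization of the H-cocycle equation,
`b·λ·g(∂,λ) = (∂+Δλ)·g(∂,0) − (∂+Δ̄λ)·g(∂+λ,0)`, the coefficients satisfy
`b·aᵢ = −a₀·(C(m,i+1) + Δ̄·C(m,i))` for `1 ≤ i ≤ m`, and if `a₀ ≠ 0` then `Δ − Δ̄ = m + b`.
Here `Δ'` stands for `Δ̄`. -/
theorem stmt_10 (b Δ Δ' : ℂ) (hb : b ≠ 0) (m : ℕ) (a : ℕ → ℂ)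
    (heq : ∀ pa lam : ℂ,
      b * lam * (∑ i ∈ Finset.range (m + 1), a i * pa ^ (m - i) * lam ^ i)
        = (pa + Δ * lam) * (∑ i ∈ Finset.range (m + 1), a i * pa ^ (m - i) * (0 : ℂ) ^ i)
          - (pa + Δ' * lam) *
              (∑ i ∈ Finset.range (m + 1), a i * (pa + lam) ^ (m - i) * (0 : ℂ) ^ i)) :
    (∀ i : ℕ, 1 ≤ i → i ≤ m →
        b * a i = -(a 0) * ((m.choose (i + 1) : ℂ) + Δ' * (m.choose i : ℂ))) ∧
      (a 0 ≠ 0 → Δ - Δ' = m + b) := by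
  classical
  have key : ∀ x : ℂ, b * (∑ i ∈ Finset.range (m+1), a i * x ^ (m - i))
      = (x + Δ) * (a 0 * x ^ m) - (x + Δ') * (a 0 * (x + 1) ^ m) := by
    intro x
    have e1 : ∀ y : ℂ, (∑ i ∈ Finset.range (m+1), a i * y ^ (m - i) * (0:ℂ) ^ i)
        = a 0 * y ^ m := by
      intro y
      rw [Finset.sum_range_succ']
      simp
    have h := heq x 1
    rw [e1, e1] at h
    simpa using h
  set P : ℂ[X] := ∑ i ∈ Finset.range (m+1), C (b * a i) * X ^ (m - i) with hPdef
  set Q : ℂ[X] := C (a 0) * (X ^ (m+1) + C Δ * X ^ m)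
      - C (a 0) * ((X + 1) ^ (m+1) + C (Δ' - 1) * (X + 1) ^ m) with hQdef
  have hPQ : P = Q := by
    apply Polynomial.funext
    intro x
    simp only [hPdef, hQdef, eval_finset_sum, eval_mul, eval_add, eval_sub, eval_pow,
      eval_C, eval_X, eval_one]
    have hs : (∑ i ∈ Finset.range (m+1), b * a i * x ^ (m - i))
        = b * ∑ i ∈ Finset.range (m+1), a i * x ^ (m - i) := by
      rw [Finset.mul_sum]; simp [mul_assoc]
    rw [hs, key x]
    ring
  have hP : ∀ i : ℕ, i ≤ m → P.coeff (m - i) = b * a i := by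
    intro i hi
    simp only [hPdef, finset_sum_coeff, coeff_C_mul, coeff_X_pow]
    rw [Finset.sum_eq_single i]
    · simp
    · intro j hj hne
      have hj' : j ≤ m := by simpa using Nat.lt_succ_iff.mp (Finset.mem_range.mp hj)
      have hd : ¬ (m - i = m - j) := fun h => hne (by omega)
      simp [hd]
    · intro h; exact absurd (Finset.mem_range.mpr (by omega)) h
  have hQ : ∀ n : ℕ, Q.coeff n
      = a 0 * ((if n = m + 1 then (1:ℂ) else 0) + Δ * (if n = m then (1:ℂ) else 0))
        - a 0 * (((m+1).choose n : ℂ) + (Δ' - 1) * (m.choose n : ℂ)) := by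
    intro n
    simp only [hQdef, coeff_sub, coeff_add, coeff_C_mul, coeff_X_pow, coeff_X_add_one_pow]
  constructor
  · intro i hi1 him
    have h1 : b * a i = Q.coeff (m - i) := by rw [← hPQ, hP i him]
    have hne1 : ¬ (m - i = m + 1) := by omega
    have hne2 : ¬ (m - i = m) := by omega
    have hch1 : (m+1).choose (m - i) = m.choose i + m.choose (i+1) := by
      have h1' : (m+1) - (i+1) = m - i := by omega
      have := Nat.choose_symm (show i + 1 ≤ m + 1 by omega)
      rw [h1'] at this
      rw [this, Nat.choose_succ_succ]
    have hch2 : m.choose (m - i) = m.choose i := Nat.choose_symm him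
    rw [hQ, if_neg hne1, if_neg hne2, hch1, hch2] at h1
    push_cast at h1
    rw [h1]; ring
  · intro ha0
    have h1 : b * a 0 = Q.coeff m := by
      have := hP 0 (Nat.zero_le m)
      rw [Nat.sub_zero] at this
      rw [← hPQ, this]
    have hne1 : ¬ (m = m + 1) := by omega
    have hch1 : (m+1).choose m = m + 1 := by
      simpa using Nat.choose_symm (show 1 ≤ m + 1 by omega)
    rw [hQ, if_neg hne1, if_pos rfl, hch1, Nat.choose_self] at h1
    push_cast at h1
    have : b = Δ - m - Δ' := by
      have h2 : a 0 * b = a 0 * (Δ - ↑m - Δ') := by rw [mul_comm] at h1; rw [h1]; ring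
      exact mul_left_cancel₀ ha0 h2
    rw [this]; ring
end

section
/- Let b, Δ, Δ̄ ∈ ℂ with b ≠ 0 and Δ̄ ≠ 0, and let g be a nonzero homogeneous polynomial of total degree m in two variables over ℂ such that −(bλ+μ)·g(∂,λ+μ) = (∂+Δ̄λ)·g(∂+λ,μ) − (∂+μ+Δλ)·g(∂,μ) for all ∂, λ, μ ∈ ℂ. Then m ≤ 3. -/
private lemma ev2_homog {m : ℕ} {g : MvPolynomial (Fin 2) ℂ} (h : g.IsHomogeneous m)
    (t x y : ℂ) : ev2 g (t * x) (t * y) = t ^ m * ev2 g x y := by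
  unfold ev2
  have hv : ![t * x, t * y] = fun i => t * (![x, y] i) := by
    funext i; fin_cases i <;> simp
  rw [hv, MvPolynomial.eval_eq, MvPolynomial.eval_eq, Finset.mul_sum]
  refine Finset.sum_congr rfl fun d hd => ?_
  have hdeg : ∑ i ∈ d.support, d i = m := by
    have h1 := h (MvPolynomial.mem_support_iff.mp hd)
    rw [← h1, Finsupp.weight_apply]
    simp [Finsupp.sum]
  rw [Finset.prod_congr rfl (fun i _ => mul_pow t (![x,y] i) (d i)),
    Finset.prod_mul_distrib, Finset.prod_pow_eq_pow_sum, hdeg]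
  ring

/-- A nonzero homogeneous solution of total degree `m` of the H-cocycle equation (F) for
`W(b)` with `b ≠ 0` and `Δ̄ ≠ 0` has `m ≤ 3`. Here `Δ'` stands for `Δ̄`. -/
theorem stmt_11 (b Δ Δ' : ℂ) (hb : b ≠ 0) (hΔ' : Δ' ≠ 0) (m : ℕ)
    (g : MvPolynomial (Fin 2) ℂ) (hg0 : g ≠ 0) (hhom : g.IsHomogeneous m)
    (hg : ∀ pa lam mu : ℂ,
      -(b * lam + mu) * ev2 g pa (lam + mu)
        = (pa + Δ' * lam) * ev2 g (pa + lam) mu - (pa + mu + Δ * lam) * ev2 g pa mu) :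
    m ≤ 3 := by
  by_contra hm3
  push_neg at hm3
  have hm0 : m ≠ 0 := by omega
  set c : ℂ := ev2 g 1 0 with hc
  -- value on the axis
  have hG0 : ∀ x : ℂ, ev2 g x 0 = x ^ m * c := by
    intro x
    have h := ev2_homog hhom x 1 0
    simpa using h
  -- the key identity  b * y * G x y = -c * P x y
  have key : ∀ x y : ℂ,
      b * y * ev2 g x y = -c * ((x + Δ' * y) * (x + y) ^ m - (x + Δ * y) * x ^ m) := by
    intro x y
    have h := hg x y 0
    simp only [add_zero] at h
    rw [hG0, hG0] at h
    linear_combination -h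
  -- nonvanishing of c
  have hcne : c ≠ 0 := by
    intro h0
    apply hg0
    have hzero : ∀ v : Fin 2 → ℂ,
        MvPolynomial.eval v (MvPolynomial.X 1 * g) = 0 := by
      intro v
      have hk := key (v 0) (v 1)
      rw [h0] at hk
      simp only [neg_zero, zero_mul] at hk
      have hveq : ![v 0, v 1] = v := by funext i; fin_cases i <;> rfl
      have h2 : v 1 * ev2 g (v 0) (v 1) = 0 := by
        rcases mul_eq_zero.mp (by linear_combination hk :
          b * (v 1 * ev2 g (v 0) (v 1)) = 0) with h | h
        · exact absurd h hb
        · exact h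
      rw [map_mul, MvPolynomial.eval_X]
      unfold ev2 at h2
      rw [hveq] at h2
      exact h2
    have hXg : MvPolynomial.X 1 * g = 0 := by
      apply MvPolynomial.funext (q := 0)
      simpa using hzero
    rcases mul_eq_zero.mp hXg with h | h
    · exact absurd h (MvPolynomial.X_ne_zero 1)
    · exact h
  -- the star identity (the ∂ = 0 slice of the cocycle equation, rewritten with key)
  have star : ∀ lam mu : ℂ,
      (b * lam + mu) * mu * (lam + mu) * (lam + mu) ^ m
        + lam * (lam + mu) * ((lam + Δ' * mu) * (lam + mu) ^ m - (lam + Δ * mu) * lam ^ m)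
        - (mu + Δ * lam) * (lam + mu) * mu * mu ^ m = 0 := by
    intro lam mu
    have H := hg 0 lam mu
    have k1 := key 0 (lam + mu)
    have k2 := key lam mu
    have k3 := key 0 mu
    simp only [zero_add] at H k1 k2 k3
    rw [zero_pow hm0] at k1 k3
    have main : c * Δ' * ((b * lam + mu) * mu * (lam + mu) * (lam + mu) ^ m
        + lam * (lam + mu) * ((lam + Δ' * mu) * (lam + mu) ^ m - (lam + Δ * mu) * lam ^ m)
        - (mu + Δ * lam) * (lam + mu) * mu * mu ^ m) = 0 := by
      linear_combination (b * mu * (lam + mu)) * H + ((b * lam + mu) * mu) * k1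
        + (Δ' * lam * (lam + mu)) * k2 - ((mu + Δ * lam) * (lam + mu)) * k3
    exact (mul_eq_zero.mp main).resolve_left (mul_ne_zero hcne hΔ')
  -- real lower bound on 2^m
  have key16 : ∀ q : ℝ, q < 16 → (2 : ℂ) ^ m ≠ (q : ℂ) := by
    intro q hq h
    have h2 : ((2 : ℝ) ^ m : ℂ) = (q : ℂ) := by push_cast; exact_mod_cast h
    have h3 : (2 : ℝ) ^ m = q := by exact_mod_cast h2
    have h4 : (16 : ℝ) ≤ (2 : ℝ) ^ m := by
      calc (16 : ℝ) = 2 ^ 4 := by norm_num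
      _ ≤ 2 ^ m := by
        apply pow_le_pow_right₀ (by norm_num) (by omega)
    linarith
  have hT1 : (2 : ℂ) ^ m ≠ 1 := by simpa using key16 1 (by norm_num)
  have hT2 : (2 : ℂ) ^ m ≠ 2 := by simpa using key16 2 (by norm_num)
  have hT4 : (2 : ℂ) ^ m ≠ 4 := by simpa using key16 4 (by norm_num)
  have hT8 : (2 : ℂ) ^ m ≠ 8 := by simpa using key16 8 (by norm_num)
  have hTm2 : (2 : ℂ) ^ m ≠ -2 := by
    have := key16 (-2) (by norm_num); simpa using this
  have hThalf : (2 : ℂ) ^ m ≠ 2⁻¹ := by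
    have := key16 2⁻¹ (by norm_num); simpa using this
  -- instantiate at the four ratios
  have hA := star 1 1
  have hB := star 1 (-2)
  have hC := star 1 2
  have hD := star 3 (-1)
  rw [show ((1:ℂ) + 1) = 2 by norm_num, one_pow] at hA
  rw [show ((1:ℂ) + -2) = -1 by norm_num, one_pow] at hB
  rw [show ((1:ℂ) + 2) = 3 by norm_num, one_pow] at hC
  rw [show ((3:ℂ) + -1) = 2 by norm_num] at hD
  rcases Nat.even_or_odd m with he | ho
  · -- even case
    rw [he.neg_pow, he.neg_pow, one_pow] at hB
    rw [he.neg_pow, one_pow] at hD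
    have e1 : (2:ℂ)^m * (2 + (b + Δ')) = 2 * (1 + Δ) := by linear_combination hA / 2
    have e3 : Δ * (1 + (2:ℂ)^m) = (b + Δ') + 2 * (2:ℂ)^m - 2 := by
      linear_combination (-1/2 : ℂ) * hB
    have e4 : (3:ℂ)^m * (5 + 2*(b + Δ')) = 1 + 2*Δ + 4*(2:ℂ)^m + 2*(2:ℂ)^m*Δ := by
      linear_combination hC / 3
    have e5 : 3*(3:ℂ)^m*(3 - Δ) = 10*(2:ℂ)^m - 3*(2:ℂ)^m*(b + Δ') + 3*Δ - 1 := by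
      linear_combination -hD / 2
    set T := (2:ℂ)^m with hTdef
    set U := (3:ℂ)^m with hUdef
    have step1 : (T - 1) * ((b + Δ') * (T + 2) + 2 * (T - 1)) = 0 := by
      linear_combination (T + 1) * e1 + 2 * e3
    rcases mul_eq_zero.mp step1 with h | hW
    · exact hT1 (by linear_combination h)
    · have f4 : U * (T + 14) = 8*T^2 + 9*T - 2 := by
        linear_combination (T + 2) * e4 - (T + 2) * (1 + T) * e1 - (2*U - T^2 - T) * hW
      have f5 : 6*U*(T + 8) = 32*T^2 + 38*T - 16 := by
        linear_combination 2*(T + 2) * e5 - 3*(T + 2)*(U + 1) * e1 + 3*T*(U - 1) * hW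
      have final : (T - 1) * (T - 4) * (T + 2) = 0 := by
        linear_combination (-(6*(T + 8))/16) * f4 + ((T + 14)/16) * f5
      rcases mul_eq_zero.mp final with h | h
      · rcases mul_eq_zero.mp h with h | h
        · exact hT1 (by linear_combination h)
        · exact hT4 (by linear_combination h)
      · exact hTm2 (by linear_combination h)
  · -- odd case
    rw [ho.neg_pow, ho.neg_pow, one_pow] at hB
    rw [ho.neg_pow, one_pow] at hD
    have e1 : (2:ℂ)^m * (2 + (b + Δ')) = 2 * (1 + Δ) := by linear_combination hA / 2
    have e3 : Δ * ((2:ℂ)^m - 1) = (b + Δ') + 2 * (2:ℂ)^m - 3 := by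
      linear_combination hB / 2
    have e4 : (3:ℂ)^m * (5 + 2*(b + Δ')) = 1 + 2*Δ + 4*(2:ℂ)^m + 2*(2:ℂ)^m*Δ := by
      linear_combination hC / 3
    have e5 : 3*(3:ℂ)^m*(3 - Δ) = 10*(2:ℂ)^m - 3*(2:ℂ)^m*(b + Δ') - 3*Δ + 1 := by
      linear_combination -hD / 2
    set T := (2:ℂ)^m with hTdef
    set U := (3:ℂ)^m with hUdef
    have step1 : (T - 2) * ((b + Δ') * (T + 1) + 2 * (T - 2)) = 0 := by
      linear_combination (T - 1) * e1 + 2 * e3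
    rcases mul_eq_zero.mp step1 with h | hW
    · exact hT2 (by linear_combination h)
    · have f4 : U * (T + 13) = 8*T^2 + 7*T - 1 := by
        linear_combination (T + 1) * e4 - (T + 1) * (T + 1) * e1 - (2*U - T^2 - T) * hW
      have f5 : 6*U*(T + 4) = 32*T^2 - 14*T + 8 := by
        linear_combination 2*(T + 1) * e5 - 3*(T + 1)*(U - 1) * e1 - 3*T*(3 - U) * hW
      have final : (T - 2) * (2*T - 1) * (T - 8) = 0 := by
        linear_combination (-(6*(T + 4))/8) * f4 + ((T + 13)/8) * f5
      rcases mul_eq_zero.mp final with h | h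
      · rcases mul_eq_zero.mp h with h | h
        · exact hT2 (by linear_combination h)
        · exact hThalf (by linear_combination h / 2)
      · exact hT8 (by linear_combination h)
end

section
/- Let b, Δ, Δ̄ ∈ ℂ with b ≠ 0, and let g be a nonzero homogeneous polynomial of total degree 1 in two variables over ℂ. Then −(bλ+μ)·g(∂,λ+μ) = (∂+Δ̄λ)·g(∂+λ,μ) − (∂+μ+Δλ)·g(∂,μ) holds for all ∂, λ, μ ∈ ℂ if and only if Δ − Δ̄ = 1 + b and there exists a nonzero c ∈ ℂ with g(∂,λ) = c·(∂ − (Δ̄/b)·λ). -/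
namespace MvPolynomial

theorem IsHomogeneous.exists_eq_sum_smul_X {σ R : Type*} [Fintype σ] [CommSemiring R]
    {φ : MvPolynomial σ R} (h : φ.IsHomogeneous 1) : ∃ c : σ → R, ∑ i, c i • X i = φ := by
  rw [← mem_homogeneousSubmodule, homogeneousSubmodule_one_eq_span_X] at h
  exact (Submodule.mem_span_range_iff_exists_fun R).mp h

end MvPolynomial

open MvPolynomial in
theorem exists_ev2_eq_linearForm {g : MvPolynomial (Fin 2) ℂ} (hg0 : g ≠ 0)
    (hhom : g.IsHomogeneous 1) :
    ∃ a d : ℂ, (a ≠ 0 ∨ d ≠ 0) ∧ ∀ x y : ℂ, ev2 g x y = a * x + d * y := by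
  obtain ⟨c, rfl⟩ := hhom.exists_eq_sum_smul_X
  refine ⟨c 0, c 1, ?_, fun x y => by simp [ev2, Fin.sum_univ_two]⟩
  by_contra! h
  simp [Fin.sum_univ_two, h] at hg0

theorem cocycle_linearForm_iff {R : Type*} [CommRing R] (a d b Δ Δ' : R) :
    (∀ pa lam mu : R,
      -(b * lam + mu) * (a * pa + d * (lam + mu))
        = (pa + Δ' * lam) * (a * (pa + lam) + d * mu) - (pa + mu + Δ * lam) * (a * pa + d * mu)) ↔
    (a * (Δ - Δ' - 1 - b) = 0 ∧ b * d + Δ' * a = 0 ∧ d * (Δ - Δ' - 1 - b) = 0) := by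
  constructor
  · intro H
    have h₁ := H 1 1 0
    have h₂ := H 0 1 0
    have h₃ := H 0 1 1
    exact ⟨by linear_combination h₁ - h₂, by linear_combination -h₂,
      by linear_combination h₃ - h₂⟩
  · rintro ⟨h₁, h₂, h₃⟩ pa lam mu
    linear_combination pa * lam * h₁ - lam ^ 2 * h₂ + lam * mu * h₃

theorem cocycle_coeff_conditions_iff {a d b Δ Δ' : ℂ} (hb : b ≠ 0) (had : a ≠ 0 ∨ d ≠ 0) :
    (a * (Δ - Δ' - 1 - b) = 0 ∧ b * d + Δ' * a = 0 ∧ d * (Δ - Δ' - 1 - b) = 0) ↔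
    (Δ - Δ' = 1 + b ∧ ∃ c : ℂ, c ≠ 0 ∧ ∀ x y : ℂ, a * x + d * y = c * (x - Δ' / b * y)) := by
  constructor
  · rintro ⟨h₁, h₂, h₃⟩
    have hk : Δ - Δ' - 1 - b = 0 := by
      rcases had with ha | hd
      · exact (mul_eq_zero.mp h₁).resolve_left ha
      · exact (mul_eq_zero.mp h₃).resolve_left hd
    have hd : d = -(Δ' * a) / b := by field_simp; linear_combination h₂
    have ha : a ≠ 0 := by
      rintro rfl
      simp_all
    refine ⟨by linear_combination hk, a, ha, fun x y => ?_⟩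
    rw [hd]
    ring
  · rintro ⟨hk, c, -, hc⟩
    have ha : a = c := by simpa using hc 1 0
    have hd : d = -(c * Δ' / b) := by simpa [mul_div_assoc] using hc 0 1
    subst ha hd
    exact ⟨by linear_combination a * hk, by field_simp; ring,
      by linear_combination -(a * Δ' / b) * hk⟩

/-- Degree `m = 1` case: a nonzero homogeneous polynomial `g` of total degree `1` satisfies
the H-cocycle equation (F) for `W(b)`, `b ≠ 0`, if and only if `Δ − Δ̄ = 1 + b` and
`g(∂,λ) = c·(∂ − (Δ̄/b)·λ)` for some nonzero constant `c`. Here `Δ'` stands for `Δ̄`. -/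
theorem stmt_13 (b Δ Δ' : ℂ) (hb : b ≠ 0) (g : MvPolynomial (Fin 2) ℂ) (hg0 : g ≠ 0)
    (hhom : g.IsHomogeneous 1) :
    (∀ pa lam mu : ℂ,
      -(b * lam + mu) * ev2 g pa (lam + mu)
        = (pa + Δ' * lam) * ev2 g (pa + lam) mu - (pa + mu + Δ * lam) * ev2 g pa mu) ↔
    (Δ - Δ' = 1 + b ∧ ∃ c : ℂ, c ≠ 0 ∧
      ∀ pa lam : ℂ, ev2 g pa lam = c * (pa - Δ' / b * lam)) := by
  obtain ⟨a, d, had, hev⟩ := exists_ev2_eq_linearForm hg0 hhom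
  simp only [hev]
  rw [cocycle_linearForm_iff, cocycle_coeff_conditions_iff hb had]
end

section
/- Let b, Δ, Δ̄ ∈ ℂ with b ≠ 0 and Δ̄ ≠ 0, and let g be a nonzero homogeneous polynomial of total degree 2 in two variables over ℂ. Then −(bλ+μ)·g(∂,λ+μ) = (∂+Δ̄λ)·g(∂+λ,μ) − (∂+μ+Δλ)·g(∂,μ) holds for all ∂, λ, μ ∈ ℂ if and only if Δ = 1, Δ̄ = −1−b, and there exists a nonzero c ∈ ℂ with g(∂,λ) = c·(∂² − ((1+2Δ̄)/b)·∂λ − (Δ̄/b)·λ²). -/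
open Finsupp in
lemma Finsupp.eq_of_degree_eq_two_fin_two {d : Fin 2 →₀ ℕ} (h : d.degree = 2) :
    d = single 0 2 ∨ d = single 0 1 + single 1 1 ∨ d = single 1 2 := by
  rw [degree_eq_sum, Fin.sum_univ_two] at h
  have hd : d = single 0 (d 0) + single 1 (d 1) := by
    ext i; fin_cases i <;> simp
  obtain h0 | h0 | h0 : d 0 = 2 ∨ d 0 = 1 ∨ d 0 = 0 := by omega
  · left; rw [hd, h0, show d 1 = 0 by omega, single_zero, add_zero]
  · right; left; rw [hd, h0, show d 1 = 1 by omega]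
  · right; right; rw [hd, h0, show d 1 = 2 by omega, single_zero, zero_add]

namespace MvPolynomial

open Finsupp

variable {R : Type*} [CommSemiring R]

lemma IsHomogeneous.eval_of_fin_two_two {g : MvPolynomial (Fin 2) R} (hg : g.IsHomogeneous 2)
    (x : Fin 2 → R) :
    eval x g = coeff (single 0 2) g * x 0 ^ 2 + coeff (single 0 1 + single 1 1) g * (x 0 * x 1)
      + coeff (single 1 2) g * x 1 ^ 2 := by
  have hsupp : g.support ⊆ {single 0 2, single 0 1 + single 1 1, single 1 2} := by
    intro d hd
    have hdeg : d.degree = 2 := (hg.degree_eq_sum_deg_support hd).symm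
    rcases eq_of_degree_eq_two_fin_two hdeg with rfl | rfl | rfl <;> simp
  rw [eval_eq', Finset.sum_subset hsupp fun d _ hd => by rw [notMem_support_iff.mp hd, zero_mul]]
  rw [Finset.sum_insert, Finset.sum_insert, Finset.sum_singleton]
  · simp only [Fin.prod_univ_two, Finsupp.add_apply, single_apply]
    norm_num
    ring
  all_goals simp [Finsupp.ext_iff, Fin.forall_fin_two]

end MvPolynomial

section Cocycle

variable {K : Type*} [Field K] {A B C b Δ Δ' : K}

lemma cocycle_defect_of_quadratic {f : K → K → K}
    (hf : ∀ x y, f x y = A * x ^ 2 + B * (x * y) + C * y ^ 2) (pa lam mu : K) :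
    -(b * lam + mu) * f pa (lam + mu)
        - ((pa + Δ' * lam) * f (pa + lam) mu - (pa + mu + Δ * lam) * f pa mu)
      = lam * (Δ - Δ' - b - 2) * f pa mu
        - lam ^ 2 * ((B * b + A * (1 + 2 * Δ')) * pa + (C * (2 * b + 1) + B * Δ') * mu)
        - lam ^ 3 * (C * b + A * Δ') := by
  simp only [hf]
  ring

lemma coeff_eqs_of_cocycle_quadratic [CharZero K] {f : K → K → K}
    (hf : ∀ x y, f x y = A * x ^ 2 + B * (x * y) + C * y ^ 2)
    (H : ∀ pa lam mu, -(b * lam + mu) * f pa (lam + mu)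
        = (pa + Δ' * lam) * f (pa + lam) mu - (pa + mu + Δ * lam) * f pa mu) :
    C * b + A * Δ' = 0 ∧ B * b + A * (1 + 2 * Δ') = 0 ∧ C * (2 * b + 1) + B * Δ' = 0
      ∧ A * (Δ - Δ' - b - 2) = 0 := by
  have hdefect pa mu := (cocycle_defect_of_quadratic hf pa 1 mu).symm.trans
    (sub_eq_zero.mpr (H pa 1 mu))
  have h00 := hdefect 0 0
  have h10 := hdefect 1 0
  have h10' := hdefect (-1) 0
  have h01 := hdefect 0 1
  have h01' := hdefect 0 (-1)
  simp only [hf] at h00 h10 h10' h01 h01'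
  refine ⟨?_, ?_, ?_, ?_⟩
  · linear_combination -h00
  · linear_combination (h10' - h10) / 2
  · linear_combination (h01' - h01) / 2
  · linear_combination (h10 + h10') / 2 - h00

lemma coeff_sq_ne_zero_of_cocycle (hb : b ≠ 0) (hABC : A ≠ 0 ∨ B ≠ 0 ∨ C ≠ 0)
    (h₁ : C * b + A * Δ' = 0) (h₂ : B * b + A * (1 + 2 * Δ') = 0) : A ≠ 0 := by
  rintro rfl
  simp only [zero_mul, add_zero, mul_eq_zero, hb, or_false] at h₁ h₂
  simp [h₁, h₂] at hABC

lemma conformal_weights_of_cocycle [CharZero K] (hA : A ≠ 0) (hΔ' : Δ' ≠ 0)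
    (h₁ : C * b + A * Δ' = 0) (h₂ : B * b + A * (1 + 2 * Δ') = 0)
    (h₃ : C * (2 * b + 1) + B * Δ' = 0) (h₄ : A * (Δ - Δ' - b - 2) = 0) :
    Δ = 1 ∧ Δ' = -1 - b := by
  have hΔ'b : Δ' = -1 - b := by
    have h : 2 * A * Δ' * (Δ' + 1 + b) = 0 := by
      linear_combination (2 * b + 1) * h₁ + Δ' * h₂ - b * h₃
    linear_combination (mul_eq_zero.mp h).resolve_left (by simp [hA, hΔ'])
  refine ⟨?_, hΔ'b⟩
  have : A * (Δ - 1) = 0 := by linear_combination h₄ + A * hΔ'b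
  simpa [hA, sub_eq_zero] using this

end Cocycle

open MvPolynomial Finsupp in
/-- Degree `m = 2` case: for `b ≠ 0` and `Δ̄ ≠ 0`, a nonzero homogeneous polynomial `g` of
total degree `2` satisfies the H-cocycle equation (F) if and only if `Δ = 1`, `Δ̄ = −1−b`,
and `g(∂,λ) = c·(∂² − ((1+2Δ̄)/b)·∂λ − (Δ̄/b)·λ²)` for some nonzero constant `c`.
Here `Δ'` stands for `Δ̄`. -/
theorem stmt_14 (b Δ Δ' : ℂ) (hb : b ≠ 0) (hΔ' : Δ' ≠ 0)
    (g : MvPolynomial (Fin 2) ℂ) (hg0 : g ≠ 0) (hhom : g.IsHomogeneous 2) :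
    (∀ pa lam mu : ℂ,
      -(b * lam + mu) * ev2 g pa (lam + mu)
        = (pa + Δ' * lam) * ev2 g (pa + lam) mu - (pa + mu + Δ * lam) * ev2 g pa mu) ↔
    (Δ = 1 ∧ Δ' = -1 - b ∧ ∃ c : ℂ, c ≠ 0 ∧
      ∀ pa lam : ℂ,
        ev2 g pa lam = c * (pa ^ 2 - (1 + 2 * Δ') / b * (pa * lam) - Δ' / b * lam ^ 2)) := by
  set A := coeff (single 0 2) g
  set B := coeff (single 0 1 + single 1 1) g
  set C := coeff (single 1 2) g
  have hev (x y : ℂ) : ev2 g x y = A * x ^ 2 + B * (x * y) + C * y ^ 2 :=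
    hhom.eval_of_fin_two_two ![x, y]
  constructor
  · intro H
    obtain ⟨h₁, h₂, h₃, h₄⟩ := coeff_eqs_of_cocycle_quadratic hev H
    have hABC : A ≠ 0 ∨ B ≠ 0 ∨ C ≠ 0 := by
      by_contra! h
      exact hg0 <| hhom.eq_zero_of_forall_eval_eq_zero fun r => by
        simp [hhom.eval_of_fin_two_two, A, B, C, h]
    have hA := coeff_sq_ne_zero_of_cocycle hb hABC h₁ h₂
    obtain ⟨hΔ, hΔ'b⟩ := conformal_weights_of_cocycle hA hΔ' h₁ h₂ h₃ h₄
    refine ⟨hΔ, hΔ'b, A, hA, fun pa lam => ?_⟩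
    rw [hev]
    field_simp
    linear_combination pa * lam * h₂ + lam ^ 2 * h₁
  · rintro ⟨rfl, rfl, c, -, hc⟩ pa lam mu
    simp only [hc]
    field_simp
    ring
end

section
/- Let b, Δ, Δ̄ ∈ ℂ with b ≠ 0 and Δ̄ ≠ 0, and let g be a nonzero homogeneous polynomial of total degree 3 in two variables over ℂ. Then −(bλ+μ)·g(∂,λ+μ) = (∂+Δ̄λ)·g(∂+λ,μ) − (∂+μ+Δλ)·g(∂,μ) holds for all ∂, λ, μ ∈ ℂ if and only if b = −2/3, Δ = 5/3, Δ̄ = −2/3, and there exists a nonzero c ∈ ℂ with g(∂,λ) = c·(∂³ + (3/2)∂²λ − (3/2)∂λ² − λ³). -/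
open MvPolynomial in
/-- A homogeneous polynomial of degree 3 in two variables evaluates as a cubic form. -/
lemma rep3 (g : MvPolynomial (Fin 2) ℂ) (hhom : g.IsHomogeneous 3) :
    ∃ a0 a1 a2 a3 : ℂ, (g ≠ 0 → ¬(a0 = 0 ∧ a1 = 0 ∧ a2 = 0 ∧ a3 = 0)) ∧
      ∀ x y : ℂ, ev2 g x y = a0*x^3 + a1*x^2*y + a2*x*y^2 + a3*y^3 := by
  classical
  have H : ∀ (u v : Fin 2 →₀ ℕ), u 0 ≠ v 0 → u ≠ v := fun u v h hh => h (by rw [hh])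
  have n1 : (Finsupp.single 0 3 : Fin 2 →₀ ℕ) ≠ Finsupp.single 0 2 + Finsupp.single 1 1 :=
    H _ _ (by simp [Finsupp.single_apply])
  have n2 : (Finsupp.single 0 3 : Fin 2 →₀ ℕ) ≠ Finsupp.single 0 1 + Finsupp.single 1 2 :=
    H _ _ (by simp [Finsupp.single_apply])
  have n3 : (Finsupp.single 0 3 : Fin 2 →₀ ℕ) ≠ Finsupp.single 1 3 :=
    H _ _ (by simp [Finsupp.single_apply])
  have n4 : (Finsupp.single 0 2 + Finsupp.single 1 1 : Fin 2 →₀ ℕ) ≠ Finsupp.single 0 1 + Finsupp.single 1 2 :=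
    H _ _ (by simp [Finsupp.single_apply])
  have n5 : (Finsupp.single 0 2 + Finsupp.single 1 1 : Fin 2 →₀ ℕ) ≠ Finsupp.single 1 3 :=
    H _ _ (by simp [Finsupp.single_apply])
  have n6 : (Finsupp.single 0 1 + Finsupp.single 1 2 : Fin 2 →₀ ℕ) ≠ Finsupp.single 1 3 :=
    H _ _ (by simp [Finsupp.single_apply])
  have key : g = monomial (Finsupp.single 0 3) (g.coeff (Finsupp.single 0 3))
      + monomial (Finsupp.single 0 2 + Finsupp.single 1 1) (g.coeff (Finsupp.single 0 2 + Finsupp.single 1 1))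
      + monomial (Finsupp.single 0 1 + Finsupp.single 1 2) (g.coeff (Finsupp.single 0 1 + Finsupp.single 1 2))
      + monomial (Finsupp.single 1 3) (g.coeff (Finsupp.single 1 3)) := by
    ext d
    simp only [coeff_add, coeff_monomial]
    by_cases hd : g.coeff d = 0
    · split_ifs with h1 h2 h3 h4 <;> simp_all
    · have hsum : d 0 + d 1 = 3 := by
        have h := hhom hd
        rw [Finsupp.weight_apply, Finsupp.sum_fintype] at h
        · simpa [Fin.sum_univ_two] using h
        · intro; simp
      have hrep : d = Finsupp.single 0 (d 0) + Finsupp.single 1 (d 1) := by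
        ext i
        fin_cases i <;> simp [Finsupp.single_apply]
      have hcases : d 0 = 0 ∧ d 1 = 3 ∨ d 0 = 1 ∧ d 1 = 2 ∨ d 0 = 2 ∧ d 1 = 1 ∨ d 0 = 3 ∧ d 1 = 0 := by
        omega
      obtain ⟨h0, h1⟩ | ⟨h0, h1⟩ | ⟨h0, h1⟩ | ⟨h0, h1⟩ := hcases <;>
        rw [h0, h1] at hrep <;> rw [show d = _ from hrep] <;>
        simp [n1, n2, n3, n4, n5, n6, n1.symm, n2.symm, n3.symm, n4.symm, n5.symm, n6.symm]
  refine ⟨g.coeff (Finsupp.single 0 3), g.coeff (Finsupp.single 0 2 + Finsupp.single 1 1),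
      g.coeff (Finsupp.single 0 1 + Finsupp.single 1 2), g.coeff (Finsupp.single 1 3), ?_, ?_⟩
  · rintro hg0 ⟨h0, h1, h2, h3⟩
    apply hg0
    rw [key, h0, h1, h2, h3]
    simp
  · intro x y
    rw [ev2, key]
    simp only [map_add, eval_monomial]
    rw [Finsupp.prod_add_index (by intro; simp) (by intros; rw [pow_add]),
      Finsupp.prod_add_index (by intro; simp) (by intros; rw [pow_add])]
    simp [Finsupp.prod_single_index, n1, n2, n3, n4, n5, n6,
      n1.symm, n2.symm, n3.symm, n4.symm, n5.symm, n6.symm]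
    ring

/-- A polynomial function of degree ≤ 4 vanishing everywhere has zero coefficients. -/
lemma vand4 (c0 c1 c2 c3 c4 : ℂ)
    (h : ∀ x : ℂ, c0 + c1*x + c2*x^2 + c3*x^3 + c4*x^4 = 0) :
    c0 = 0 ∧ c1 = 0 ∧ c2 = 0 ∧ c3 = 0 ∧ c4 = 0 := by
  have h0 := h 0
  have h1 := h 1
  have h2 := h (-1)
  have h3 := h 2
  have h4 := h (-2)
  refine ⟨by linear_combination h0,
    by linear_combination (2/3 : ℂ)*h1 - (2/3 : ℂ)*h2 - (1/12 : ℂ)*h3 + (1/12 : ℂ)*h4,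
    by linear_combination (2/3 : ℂ)*h1 + (2/3 : ℂ)*h2 - (1/24 : ℂ)*h3 - (1/24 : ℂ)*h4 - (5/4 : ℂ)*h0,
    by linear_combination (1/12 : ℂ)*h3 - (1/12 : ℂ)*h4 - (1/6 : ℂ)*h1 + (1/6 : ℂ)*h2,
    by linear_combination (1/24 : ℂ)*h3 + (1/24 : ℂ)*h4 - (1/6 : ℂ)*h1 - (1/6 : ℂ)*h2 + (1/4 : ℂ)*h0⟩

/-- Degree `m = 3` case: for `b ≠ 0` and `Δ̄ ≠ 0`, a nonzero homogeneous polynomial `g` of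
total degree `3` satisfies the H-cocycle equation (F) if and only if `b = −2/3`, `Δ = 5/3`,
`Δ̄ = −2/3`, and `g(∂,λ) = c·(∂³ + (3/2)∂²λ − (3/2)∂λ² − λ³)` for some nonzero constant `c`.
Here `Δ'` stands for `Δ̄`. -/
theorem stmt_15 (b Δ Δ' : ℂ) (hb : b ≠ 0) (hΔ' : Δ' ≠ 0)
    (g : MvPolynomial (Fin 2) ℂ) (hg0 : g ≠ 0) (hhom : g.IsHomogeneous 3) :
    (∀ pa lam mu : ℂ,
      -(b * lam + mu) * ev2 g pa (lam + mu)
        = (pa + Δ' * lam) * ev2 g (pa + lam) mu - (pa + mu + Δ * lam) * ev2 g pa mu) ↔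
    (b = -2/3 ∧ Δ = 5/3 ∧ Δ' = -2/3 ∧ ∃ c : ℂ, c ≠ 0 ∧
      ∀ pa lam : ℂ,
        ev2 g pa lam
          = c * (pa ^ 3 + 3/2 * (pa ^ 2 * lam) - 3/2 * (pa * lam ^ 2) - lam ^ 3)) := by
  obtain ⟨a0, a1, a2, a3, hnz, hrep⟩ := rep3 g hhom
  have hne := hnz hg0
  constructor
  · intro H
    have H' : ∀ p l m : ℂ,
        -(b*l+m)*(a0*p^3+a1*p^2*(l+m)+a2*p*(l+m)^2+a3*(l+m)^3)
          = (p+Δ'*l)*(a0*(p+l)^3+a1*(p+l)^2*m+a2*(p+l)*m^2+a3*m^3)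
            - (p+m+Δ*l)*(a0*p^3+a1*p^2*m+a2*p*m^2+a3*m^3) := by
      intro p l m
      have h := H p l m
      simp only [hrep] at h
      exact h
    have key : ∀ l m : ℂ,
        (a3*(Δ-Δ'-b-3)*l*m^3 + (-3*a3*(1+b) - a2*Δ')*l^2*m^2
            + (-a3*(1+3*b) - a1*Δ')*l^3*m + (-a3*b - a0*Δ')*l^4) = 0 ∧
        (a2*(Δ-Δ'-b-3)*l*m^2 + (-a2*(1+2*b) - a1*(1+2*Δ'))*l^2*m
            + (-a2*b - a0*(1+3*Δ'))*l^3) = 0 ∧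
        (a1*(Δ-Δ'-b-3)*l*m + (-a1*b - 3*a0 - 3*a0*Δ')*l^2) = 0 ∧
        (a0*(Δ-Δ'-b-3)*l) = 0 ∧ (0:ℂ) = 0 := by
      intro l m
      exact vand4 _ _ _ _ _ (fun p => by linear_combination H' p l m)
    -- scalar coefficient equations
    have e10 : a0*(Δ-Δ'-b-3) = 0 := by linear_combination (key 1 0).2.2.2.1
    have e9 : a1*b + 3*a0 + 3*a0*Δ' = 0 := by linear_combination -(key 1 0).2.2.1
    have h11 := (key 1 1).2.1
    have h1m1 := (key 1 (-1)).2.1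
    have h10 := (key 1 0).2.1
    have e7 : a2*b + a0*(1+3*Δ') = 0 := by linear_combination -h10
    have e6 : a2*(1+2*b) + a1*(1+2*Δ') = 0 := by linear_combination (1/2 : ℂ)*h1m1 - (1/2 : ℂ)*h11
    have k0 := (key 1 0).1
    have k1 := (key 1 1).1
    have km1 := (key 1 (-1)).1
    have k2 := (key 1 2).1
    have e4 : a3*b + a0*Δ' = 0 := by linear_combination -k0
    have e2 : 3*a3*(1+b) + a2*Δ' = 0 := by linear_combination k0 - (1/2 : ℂ)*k1 - (1/2 : ℂ)*km1
    have e1 : a3*(Δ-Δ'-b-3) = 0 := by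
      linear_combination (1/6 : ℂ)*k2 - (1/2 : ℂ)*k1 - (1/6 : ℂ)*km1 + (1/2 : ℂ)*k0
    have e3 : a3*(1+3*b) + a1*Δ' = 0 := by
      linear_combination (1/6 : ℂ)*k2 + (1/3 : ℂ)*km1 + (1/2 : ℂ)*k0 - k1
    -- a3 ≠ 0
    have ha3 : a3 ≠ 0 := by
      intro ha3
      have h0' : a0*Δ' = 0 := by linear_combination e4 - b*ha3
      have h1' : a1*Δ' = 0 := by linear_combination e3 - (1+3*b)*ha3
      have h2' : a2*Δ' = 0 := by linear_combination e2 - 3*(1+b)*ha3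
      exact hne ⟨by rcases mul_eq_zero.1 h0' with h | h; exact h; exact absurd h hΔ',
        by rcases mul_eq_zero.1 h1' with h | h; exact h; exact absurd h hΔ',
        by rcases mul_eq_zero.1 h2' with h | h; exact h; exact absurd h hΔ', ha3⟩
    have hK : Δ - Δ' - b - 3 = 0 := by
      rcases mul_eq_zero.1 e1 with h | h
      · exact absurd h ha3
      · exact h
    -- derive b
    have hq0 : b*(a2*Δ' - a3*(1+3*Δ')) = 0 := by
      linear_combination Δ'*e7 - (1+3*Δ')*e4
    have hq : a2*Δ' - a3*(1+3*Δ') = 0 := by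
      rcases mul_eq_zero.1 hq0 with h | h
      · exact absurd h hb
      · exact h
    have h2z : a3*(3*Δ' + 3*b + 4) = 0 := by linear_combination e2 - hq
    have hi : 3*Δ' + 3*b + 4 = 0 := by
      rcases mul_eq_zero.1 h2z with h | h
      · exact absurd h ha3
      · exact h
    have h3z : a3*(3*(1+b)*(1+2*b) + (1+3*b)*(1+2*Δ')) = 0 := by
      linear_combination (1+2*b)*e2 + (1+2*Δ')*e3 - Δ'*e6
    have hii : 3*(1+b)*(1+2*b) + (1+3*b)*(1+2*Δ') = 0 := by
      rcases mul_eq_zero.1 h3z with h | h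
      · exact absurd h ha3
      · exact h
    have hb2 : b = -2/3 := by linear_combination (1/2 : ℂ)*hii - (1/3 : ℂ)*(1+3*b)*hi
    have hΔ'2 : Δ' = -2/3 := by linear_combination (1/3 : ℂ)*hi - hb2
    have hΔ2 : Δ = 5/3 := by linear_combination hK + hb2 + hΔ'2
    have ha0 : a0 = -a3 := by
      linear_combination (-3/2 : ℂ)*e4 + (3/2 : ℂ)*a3*hb2 + (3/2 : ℂ)*a0*hΔ'2
    have ha1 : a1 = -(3/2)*a3 := by
      linear_combination (-3/2 : ℂ)*e3 + (9/2 : ℂ)*a3*hb2 + (3/2 : ℂ)*a1*hΔ'2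
    have ha2 : a2 = (3/2)*a3 := by
      linear_combination (-3/2 : ℂ)*e2 + (9/2 : ℂ)*a3*hb2 + (3/2 : ℂ)*a2*hΔ'2
    refine ⟨hb2, hΔ2, hΔ'2, -a3, neg_ne_zero.2 ha3, fun pa lam => ?_⟩
    rw [hrep]
    linear_combination pa^3*ha0 + pa^2*lam*ha1 + pa*lam^2*ha2
  · rintro ⟨hb2, hΔ2, hΔ'2, c, hc, hgc⟩
    intro pa lam mu
    rw [hgc, hgc, hgc, hb2, hΔ2, hΔ'2]
    ring
end
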